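/- Let r ≥ 1 be an integer and λ ∈ (−1/2, 0), and set S_{2r}(t,λ) = Σ_{s=0}^{r} (−1)^s · binom(r,s) · ((λ+r)_s/(λ+1/2)_s) · (1−t²)^s. Then: (i) for every integer k with 0 ≤ k ≤ r−1, at t = cos((2k+1)π/(2r)) (a local minimum point of the Chebyshev polynomial T_{2r}) one has 1 + S_{2r}(t,λ) < 0; and (ii) for every integer k with 1 ≤ k ≤ r−1, at t = cos(kπ/r) (an interior local maximum point of T_{2r}) one has 1 − S_{2r}(t,λ) < 0. -/

import Mathlib

open Real Finset

/-- Pochhammer symbol (z)_n = z(z+1)...(z+n-1), with (z)_0 = 1. -/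
noncomputable def poch (z : ℝ) (n : ℕ) : ℝ := ∏ i ∈ Finset.range n, (z + i)

/-- The sum S_{2r}(t, lambda). -/
noncomputable def S2r (r : ℕ) (l : ℝ) (t : ℝ) : ℝ :=
  ∑ s ∈ Finset.range (r + 1), (-1 : ℝ) ^ s * (r.choose s : ℝ) *
    (poch (l + r) s / poch (l + 1 / 2) s) * (1 - t ^ 2) ^ s

/-! ### auxiliary definitions -/

noncomputable def gg (l : ℝ) (k : ℕ) : ℝ := poch l k / (k.factorial : ℝ)

noncomputable def NN (l : ℝ) (n : ℕ) : ℝ := poch (2 * l) n / (n.factorial : ℝ)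

noncomputable def Fe (l : ℝ) (r : ℕ) (x : ℝ) : ℝ :=
  ∑ s ∈ Finset.range (r + 1), (-1 : ℝ) ^ s * (r.choose s : ℝ) *
    (poch (l + r) s / poch (l + 1 / 2) s) * x ^ s

noncomputable def Fo (l : ℝ) (r : ℕ) (x : ℝ) : ℝ :=
  ∑ s ∈ Finset.range (r + 1), (-1 : ℝ) ^ s * (r.choose s : ℝ) *
    (poch (l + r + 1) s / poch (l + 1 / 2) s) * x ^ s

noncomputable def EE (l : ℝ) (n : ℕ) (θ : ℝ) : ℝ :=
  ∑ k ∈ Finset.range (n + 1), gg l k * gg l (n - k) * Real.cos (((n : ℝ) - 2 * k) * θ)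

/-! ### poch basics -/

lemma poch_zero (z : ℝ) : poch z 0 = 1 := by simp [poch]

lemma poch_succ (z : ℝ) (n : ℕ) : poch z (n + 1) = poch z n * (z + n) := by
  simp [poch, Finset.prod_range_succ]

lemma poch_succ' (z : ℝ) (n : ℕ) : poch z (n + 1) = z * poch (z + 1) n := by
  simp only [poch, Finset.prod_range_succ']
  rw [mul_comm]
  simp only [Nat.cast_zero, add_zero]
  congr 1
  exact Finset.prod_congr rfl fun i _ => by push_cast; ring

lemma poch_pos {z : ℝ} (hz : 0 < z) (n : ℕ) : 0 < poch z n := by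
  refine Finset.prod_pos fun i _ => ?_
  positivity

lemma poch_neg {z : ℝ} (hz : z < 0) (hz1 : 0 < z + 1) (n : ℕ) : poch z (n + 1) < 0 := by
  rw [poch_succ']
  exact mul_neg_of_neg_of_pos hz (poch_pos hz1 n)

/-! ### gg and NN basics -/

lemma gg_zero (l : ℝ) : gg l 0 = 1 := by simp [gg, poch_zero]

lemma gg_succ (l : ℝ) (k : ℕ) : (k + 1 : ℝ) * gg l (k + 1) = (l + k) * gg l k := by
  have hk : ((k.factorial : ℝ)) ≠ 0 := Nat.cast_ne_zero.mpr k.factorial_ne_zero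
  have hk1 : ((k + 1 : ℕ) : ℝ) ≠ 0 := Nat.cast_ne_zero.mpr (Nat.succ_ne_zero k)
  simp only [gg, poch_succ, Nat.factorial_succ]
  push_cast
  field_simp

lemma gg_neg {l : ℝ} (hl1 : -(1/2 : ℝ) < l) (hl2 : l < 0) (k : ℕ) : gg l (k + 1) < 0 := by
  apply div_neg_of_neg_of_pos
  · exact poch_neg hl2 (by linarith) k
  · exact_mod_cast Nat.factorial_pos (k + 1)

lemma NN_neg {l : ℝ} (hl1 : -(1/2 : ℝ) < l) (hl2 : l < 0) (n : ℕ) : NN l (n + 1) < 0 := by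
  apply div_neg_of_neg_of_pos
  · exact poch_neg (by linarith) (by linarith) n
  · exact_mod_cast Nat.factorial_pos (n + 1)

lemma NN_succ (l : ℝ) (n : ℕ) : (n + 1 : ℝ) * NN l (n + 1) = (2 * l + n) * NN l n := by
  have hk : ((n.factorial : ℝ)) ≠ 0 := Nat.cast_ne_zero.mpr n.factorial_ne_zero
  have hk1 : ((n + 1 : ℕ) : ℝ) ≠ 0 := Nat.cast_ne_zero.mpr (Nat.succ_ne_zero n)
  simp only [NN, poch_succ, Nat.factorial_succ]
  push_cast
  field_simp

/-! ### the E-side recurrence -/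

lemma EE_mid (l : ℝ) (m k : ℕ) (hk : k ≤ m) :
    ((m : ℝ) + 2) * (gg l (k + 1) * gg l (m + 1 - k)) =
      ((m : ℝ) + l + 1) * (gg l (k + 1) * gg l (m - k)) +
        ((m : ℝ) + l + 1) * (gg l k * gg l (m + 1 - k)) -
          ((m : ℝ) + 2 * l) * (gg l k * gg l (m - k)) := by
  obtain ⟨j, rfl⟩ : ∃ j, m = k + j := ⟨m - k, by omega⟩
  rw [show k + j + 1 - k = j + 1 by omega, show k + j - k = j by omega]
  have e1 : gg l (k + 1) = (l + k) * gg l k / (k + 1) := by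
    rw [eq_div_iff (by positivity)]
    linarith [gg_succ l k]
  have e2 : gg l (j + 1) = (l + j) * gg l j / (j + 1) := by
    rw [eq_div_iff (by positivity)]
    linarith [gg_succ l j]
  rw [e1, e2]
  have hk1 : ((k : ℝ) + 1) ≠ 0 := by positivity
  have hj1 : ((j : ℝ) + 1) ≠ 0 := by positivity
  push_cast
  field_simp
  ring

lemma EE_bdry (l : ℝ) (m : ℕ) :
    ((m : ℝ) + 2) * gg l (m + 2) = ((m : ℝ) + l + 1) * gg l (m + 1) := by
  have := gg_succ l (m + 1)
  push_cast at this ⊢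
  linarith

lemma EE_rec (l : ℝ) (m : ℕ) (θ : ℝ) :
    ((m : ℝ) + 2) * EE l (m + 2) θ =
      2 * ((m : ℝ) + l + 1) * Real.cos θ * EE l (m + 1) θ - ((m : ℝ) + 2 * l) * EE l m θ := by
  set c : ℕ → ℝ := fun k => Real.cos (((m : ℝ) + 2 - 2 * k) * θ) with hc
  have h2 : EE l (m + 2) θ = ∑ k ∈ Finset.range (m + 3), gg l k * gg l (m + 2 - k) * c k := by
    unfold EE
    refine Finset.sum_congr rfl fun k _ => ?_
    have : (((m + 2 : ℕ) : ℝ) - 2 * k) * θ = ((m : ℝ) + 2 - 2 * k) * θ := by push_cast; ring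
    rw [this]
  have h1 : 2 * Real.cos θ * EE l (m + 1) θ =
      ∑ k ∈ Finset.range (m + 2), gg l k * gg l (m + 1 - k) * (c k + c (k + 1)) := by
    unfold EE
    rw [Finset.mul_sum]
    refine Finset.sum_congr rfl fun k _ => ?_
    have e1 : ((m : ℝ) + 2 - 2 * k) * θ = (((m + 1 : ℕ) : ℝ) - 2 * k) * θ + θ := by
      push_cast; ring
    have e2 : ((m : ℝ) + 2 - 2 * (k + 1 : ℕ)) * θ = (((m + 1 : ℕ) : ℝ) - 2 * k) * θ - θ := by
      push_cast; ring
    simp only [hc, e1, e2, Real.cos_add, Real.cos_sub]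
    ring
  have h0 : EE l m θ = ∑ k ∈ Finset.range (m + 1), gg l k * gg l (m - k) * c (k + 1) := by
    unfold EE
    refine Finset.sum_congr rfl fun k _ => ?_
    have : (((m : ℕ) : ℝ) - 2 * k) * θ = ((m : ℝ) + 2 - 2 * ((k : ℕ) + 1 : ℕ)) * θ := by
      push_cast; ring
    rw [this]
  rw [h2, h0,
    show 2 * ((m : ℝ) + l + 1) * Real.cos θ * EE l (m + 1) θ
      = ((m : ℝ) + l + 1) * (2 * Real.cos θ * EE l (m + 1) θ) from by ring, h1]
  rw [Finset.mul_sum, Finset.mul_sum, Finset.mul_sum]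
  -- peel boundaries of LHS
  rw [show m + 3 = (m + 2) + 1 from rfl, Finset.sum_range_succ, Finset.sum_range_succ']
  -- split middle sum
  have hsplit : ∑ k ∈ Finset.range (m + 2),
      ((m : ℝ) + l + 1) * (gg l k * gg l (m + 1 - k) * (c k + c (k + 1))) =
      (∑ k ∈ Finset.range (m + 1),
        ((m : ℝ) + l + 1) * (gg l (k + 1) * gg l (m - k) * c (k + 1)) +
        ((m : ℝ) + l + 1) * (gg l 0 * gg l (m + 1) * c 0)) +
      (∑ k ∈ Finset.range (m + 1),
        ((m : ℝ) + l + 1) * (gg l k * gg l (m + 1 - k) * c (k + 1)) +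
        ((m : ℝ) + l + 1) * (gg l (m + 1) * gg l 0 * c (m + 2))) := by
    have : ∀ k ∈ Finset.range (m + 2),
        ((m : ℝ) + l + 1) * (gg l k * gg l (m + 1 - k) * (c k + c (k + 1))) =
        ((m : ℝ) + l + 1) * (gg l k * gg l (m + 1 - k) * c k) +
          ((m : ℝ) + l + 1) * (gg l k * gg l (m + 1 - k) * c (k + 1)) := by
      intro k _; ring
    rw [Finset.sum_congr rfl this, Finset.sum_add_distrib]
    congr 1
    · rw [Finset.sum_range_succ']
      congr 1
      · refine Finset.sum_congr rfl fun k hk => ?_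
        rw [show m + 1 - (k + 1) = m - k from by omega]
    · rw [Finset.sum_range_succ]
      norm_num
  rw [hsplit]
  have hmid : ∑ k ∈ Finset.range (m + 1),
      ((m : ℝ) + 2) * (gg l (k + 1) * gg l (m + 2 - (k + 1)) * c (k + 1)) =
      ∑ k ∈ Finset.range (m + 1),
        (((m : ℝ) + l + 1) * (gg l (k + 1) * gg l (m - k) * c (k + 1)) +
          ((m : ℝ) + l + 1) * (gg l k * gg l (m + 1 - k) * c (k + 1)) -
            ((m : ℝ) + 2 * l) * (gg l k * gg l (m - k) * c (k + 1))) := by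
    refine Finset.sum_congr rfl fun k hk => ?_
    have hk' : k ≤ m := by simpa [Nat.lt_succ_iff] using hk
    have := EE_mid l m k hk'
    rw [show m + 2 - (k + 1) = m + 1 - k from by omega]
    linear_combination this * c (k + 1)
  rw [hmid, Finset.sum_sub_distrib, Finset.sum_add_distrib]
  simp only [Nat.sub_self, Nat.sub_zero, gg_zero, Nat.cast_zero, one_mul, mul_one]
  have hb := EE_bdry l m
  linear_combination hb * c 0 + hb * c (m + 2)

/-! ### the F-side recurrences -/

set_option maxHeartbeats 1000000 in
lemma Fe_mid {l : ℝ} (hl1 : -(1/2 : ℝ) < l) (hl2 : l < 0) (m s : ℕ) (hs : s ≤ m) (x : ℝ) :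
    (2 * (m : ℝ) + 2) * NN l (2 * m + 2) *
        ((-1 : ℝ) ^ (s+1) * (((m+1).choose (s+1) : ℕ) : ℝ) *
          (poch (l + ((m+1 : ℕ) : ℝ)) (s+1) / poch (l + 1 / 2) (s+1)) * x ^ (s+1)) =
      2 * (2 * (m : ℝ) + 1 + l) * NN l (2 * m + 1) *
          ((-1 : ℝ) ^ (s+1) * ((m.choose (s+1) : ℕ) : ℝ) *
            (poch (l + (m : ℝ) + 1) (s+1) / poch (l + 1 / 2) (s+1)) * x ^ (s+1)) -
        2 * (2 * (m : ℝ) + 1 + l) * NN l (2 * m + 1) *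
          ((-1 : ℝ) ^ s * ((m.choose s : ℕ) : ℝ) *
            (poch (l + (m : ℝ) + 1) s / poch (l + 1 / 2) s) * x ^ s * x) -
          (2 * (m : ℝ) + 2 * l) * NN l (2 * m) *
            ((-1 : ℝ) ^ (s+1) * ((m.choose (s+1) : ℕ) : ℝ) *
              (poch (l + (m : ℝ)) (s+1) / poch (l + 1 / 2) (s+1)) * x ^ (s+1)) := by
  have hA : poch (l + ((m+1 : ℕ) : ℝ)) (s+1) = poch (l + (m : ℝ) + 1) s * (l + (m : ℝ) + 1 + s) := by
    rw [show l + ((m+1 : ℕ) : ℝ) = l + (m : ℝ) + 1 by push_cast; ring, poch_succ]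
  have hP : poch (l + (m : ℝ) + 1) (s+1) = poch (l + (m : ℝ) + 1) s * (l + (m : ℝ) + 1 + s) :=
    poch_succ _ s
  have hQ1 : poch (l + 1/2) (s+1) = poch (l + 1/2) s * (l + 1/2 + s) := poch_succ _ s
  have hD : poch (l + (m : ℝ)) (s+1) = (l + (m : ℝ)) * poch (l + (m : ℝ) + 1) s := poch_succ' _ s
  have hC1 : (((m+1).choose (s+1) : ℕ) : ℝ) = ((m : ℝ) + 1) * ((m.choose s : ℕ) : ℝ) / ((s : ℝ) + 1) := by
    rw [eq_div_iff (by positivity)]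
    have h := congrArg (fun n : ℕ => (n : ℝ)) (Nat.add_one_mul_choose_eq m s)
    push_cast at h
    linarith
  have hC2 : ((m.choose (s+1) : ℕ) : ℝ) = ((m : ℝ) - s) * ((m.choose s : ℕ) : ℝ) / ((s : ℝ) + 1) := by
    rw [eq_div_iff (by positivity)]
    have h := congrArg (fun n : ℕ => (n : ℝ)) (Nat.choose_succ_right_eq m s)
    push_cast [Nat.cast_sub hs] at h
    linarith
  have hN2 : NN l (2*m+2) = (2*l + (2*(m:ℝ)+1)) * NN l (2*m+1) / (2*(m:ℝ)+2) := by
    rw [eq_div_iff (by positivity)]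
    have h := NN_succ l (2*m+1)
    rw [show 2*m+1+1 = 2*m+2 from by omega] at h
    push_cast at h
    linarith
  have hN1 : NN l (2*m+1) = (2*l + 2*(m:ℝ)) * NN l (2*m) / (2*(m:ℝ)+1) := by
    rw [eq_div_iff (by positivity)]
    have h := NN_succ l (2*m)
    push_cast at h
    linarith
  have hq2 : (0:ℝ) < l + 1/2 + (s : ℝ) := by
    have : (0:ℝ) ≤ (s : ℝ) := Nat.cast_nonneg s
    linarith
  have hfrac : poch (l + (m : ℝ) + 1) s / poch (l + 1/2) s =
      poch (l + (m : ℝ) + 1) s * (l + 1/2 + s) / poch (l + 1/2) (s+1) := by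
    rw [hQ1]
    exact (mul_div_mul_right _ _ hq2.ne').symm
  rw [hA, hP, hD, hfrac, hC1, hC2, hN2, hN1]
  have hQ' : poch (l + 1/2) (s+1) ≠ 0 := (poch_pos (by linarith) (s+1)).ne'
  have hs1 : ((s : ℝ) + 1) ≠ 0 := by positivity
  have hm1 : (2 * (m : ℝ) + 2) ≠ 0 := by positivity
  have hm2 : (2 * (m : ℝ) + 1) ≠ 0 := by positivity
  set Q := poch (l + 1/2) (s+1)
  set p := poch (l + (m : ℝ) + 1) s
  set ν := NN l (2*m)
  field_simp
  ring

lemma NN_three (l : ℝ) (m : ℕ) :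
    (2 * (m : ℝ) + 2) * NN l (2*m+2) =
      2 * (2 * (m : ℝ) + 1 + l) * NN l (2*m+1) - (2 * (m : ℝ) + 2 * l) * NN l (2*m) := by
  have h1 := NN_succ l (2*m+1)
  rw [show 2*m+1+1 = 2*m+2 from by omega] at h1
  have h2 := NN_succ l (2*m)
  push_cast at h1 h2
  linarith

lemma Fe_rec {l : ℝ} (hl1 : -(1/2 : ℝ) < l) (hl2 : l < 0) (m : ℕ) (x : ℝ) :
    (2 * (m : ℝ) + 2) * NN l (2 * m + 2) * Fe l (m + 1) x =
      2 * (2 * (m : ℝ) + 1 + l) * NN l (2 * m + 1) * (1 - x) * Fo l m x -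
        (2 * (m : ℝ) + 2 * l) * NN l (2 * m) * Fe l m x := by
  simp only [Fe, Fo]
  have expand : 2 * (2 * (m : ℝ) + 1 + l) * NN l (2 * m + 1) * (1 - x) *
      (∑ s ∈ Finset.range (m + 1), (-1 : ℝ) ^ s * (m.choose s : ℝ) *
        (poch (l + m + 1) s / poch (l + 1 / 2) s) * x ^ s) =
      2 * (2 * (m : ℝ) + 1 + l) * NN l (2 * m + 1) *
      (∑ s ∈ Finset.range (m + 1), (-1 : ℝ) ^ s * (m.choose s : ℝ) *
        (poch (l + m + 1) s / poch (l + 1 / 2) s) * x ^ s) -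
      2 * (2 * (m : ℝ) + 1 + l) * NN l (2 * m + 1) *
      (∑ s ∈ Finset.range (m + 1), (-1 : ℝ) ^ s * (m.choose s : ℝ) *
        (poch (l + m + 1) s / poch (l + 1 / 2) s) * x ^ s * x) := by
    rw [← Finset.sum_mul]
    ring
  rw [expand]
  have pad_o : (∑ s ∈ Finset.range (m + 1), (-1 : ℝ) ^ s * (m.choose s : ℝ) *
      (poch (l + m + 1) s / poch (l + 1 / 2) s) * x ^ s) =
      ∑ s ∈ Finset.range (m + 2), (-1 : ℝ) ^ s * (m.choose s : ℝ) *
      (poch (l + m + 1) s / poch (l + 1 / 2) s) * x ^ s := by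
    symm
    rw [Finset.sum_range_succ]
    simp [Nat.choose_succ_self]
  have pad_e : (∑ s ∈ Finset.range (m + 1), (-1 : ℝ) ^ s * (m.choose s : ℝ) *
      (poch (l + m) s / poch (l + 1 / 2) s) * x ^ s) =
      ∑ s ∈ Finset.range (m + 2), (-1 : ℝ) ^ s * (m.choose s : ℝ) *
      (poch (l + m) s / poch (l + 1 / 2) s) * x ^ s := by
    symm
    rw [Finset.sum_range_succ]
    simp [Nat.choose_succ_self]
  rw [pad_o, pad_e]
  rw [show m + 2 = (m + 1) + 1 from rfl]
  rw [Finset.sum_range_succ' (fun s => (-1 : ℝ) ^ s * ((m+1).choose s : ℝ) *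
    (poch (l + ((m+1:ℕ) : ℝ)) s / poch (l + 1 / 2) s) * x ^ s) (m+1)]
  rw [Finset.sum_range_succ' (fun s => (-1 : ℝ) ^ s * (m.choose s : ℝ) *
    (poch (l + m + 1) s / poch (l + 1 / 2) s) * x ^ s) (m+1)]
  rw [Finset.sum_range_succ' (fun s => (-1 : ℝ) ^ s * (m.choose s : ℝ) *
    (poch (l + m) s / poch (l + 1 / 2) s) * x ^ s) (m+1)]
  have hmid : ∀ s ∈ Finset.range (m+1),
      (2 * (m : ℝ) + 2) * NN l (2 * m + 2) *
        ((-1 : ℝ) ^ (s+1) * (((m+1).choose (s+1) : ℕ) : ℝ) *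
          (poch (l + ((m+1 : ℕ) : ℝ)) (s+1) / poch (l + 1 / 2) (s+1)) * x ^ (s+1)) =
      2 * (2 * (m : ℝ) + 1 + l) * NN l (2 * m + 1) *
          ((-1 : ℝ) ^ (s+1) * ((m.choose (s+1) : ℕ) : ℝ) *
            (poch (l + (m : ℝ) + 1) (s+1) / poch (l + 1 / 2) (s+1)) * x ^ (s+1)) -
        2 * (2 * (m : ℝ) + 1 + l) * NN l (2 * m + 1) *
          ((-1 : ℝ) ^ s * ((m.choose s : ℕ) : ℝ) *
            (poch (l + (m : ℝ) + 1) s / poch (l + 1 / 2) s) * x ^ s * x) -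
          (2 * (m : ℝ) + 2 * l) * NN l (2 * m) *
            ((-1 : ℝ) ^ (s+1) * ((m.choose (s+1) : ℕ) : ℝ) *
              (poch (l + (m : ℝ)) (s+1) / poch (l + 1 / 2) (s+1)) * x ^ (s+1)) := by
    intro s hs
    exact Fe_mid hl1 hl2 m s (by simpa [Nat.lt_succ_iff] using hs) x
  have hsum : (2 * (m : ℝ) + 2) * NN l (2 * m + 2) *
      (∑ s ∈ Finset.range (m+1), ((-1 : ℝ) ^ (s+1) * (((m+1).choose (s+1) : ℕ) : ℝ) *
          (poch (l + ((m+1 : ℕ) : ℝ)) (s+1) / poch (l + 1 / 2) (s+1)) * x ^ (s+1))) =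
      2 * (2 * (m : ℝ) + 1 + l) * NN l (2 * m + 1) *
        (∑ s ∈ Finset.range (m+1), ((-1 : ℝ) ^ (s+1) * ((m.choose (s+1) : ℕ) : ℝ) *
            (poch (l + (m : ℝ) + 1) (s+1) / poch (l + 1 / 2) (s+1)) * x ^ (s+1))) -
        2 * (2 * (m : ℝ) + 1 + l) * NN l (2 * m + 1) *
        (∑ s ∈ Finset.range (m+1), ((-1 : ℝ) ^ s * ((m.choose s : ℕ) : ℝ) *
            (poch (l + (m : ℝ) + 1) s / poch (l + 1 / 2) s) * x ^ s * x)) -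
          (2 * (m : ℝ) + 2 * l) * NN l (2 * m) *
        (∑ s ∈ Finset.range (m+1), ((-1 : ℝ) ^ (s+1) * ((m.choose (s+1) : ℕ) : ℝ) *
            (poch (l + (m : ℝ)) (s+1) / poch (l + 1 / 2) (s+1)) * x ^ (s+1))) := by
    rw [Finset.mul_sum, Finset.mul_sum, Finset.mul_sum, Finset.mul_sum,
      ← Finset.sum_sub_distrib, ← Finset.sum_sub_distrib]
    exact Finset.sum_congr rfl hmid
  have hb := NN_three l m
  simp only [pow_zero, Nat.choose_zero_right, Nat.cast_one, poch_zero, one_mul, mul_one, div_one]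
  linear_combination hsum + hb

lemma choose_cast_id (m s : ℕ) (hs : s ≤ m + 1) :
    ((m : ℝ) + 1) * ((m.choose s : ℕ) : ℝ) = ((m : ℝ) + 1 - s) * (((m+1).choose s : ℕ) : ℝ) := by
  have h1 := Nat.add_one_mul_choose_eq m s
  have h2 := Nat.choose_succ_right_eq (m + 1) s
  have h : (m + 1) * m.choose s = (m + 1).choose s * (m + 1 - s) := h1.trans h2
  have h' := congrArg (fun n : ℕ => (n : ℝ)) h
  push_cast [Nat.cast_sub hs] at h'
  linarith

lemma Fo_rec {l : ℝ} (hl1 : -(1/2 : ℝ) < l) (hl2 : l < 0) (m : ℕ) (x : ℝ) :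
    (2 * (m : ℝ) + 3) * NN l (2 * m + 3) * Fo l (m + 1) x =
      2 * (2 * (m : ℝ) + 2 + l) * NN l (2 * m + 2) * Fe l (m + 1) x -
        (2 * (m : ℝ) + 1 + 2 * l) * NN l (2 * m + 1) * Fo l m x := by
  have hQpos : ∀ s : ℕ, 0 < poch (l + 1/2) s := fun s => poch_pos (by linarith) s
  have hpad : Fo l m x = ∑ s ∈ Finset.range (m + 2), (-1 : ℝ) ^ s * (m.choose s : ℝ) *
      (poch (l + m + 1) s / poch (l + 1 / 2) s) * x ^ s := by
    symm
    rw [Finset.sum_range_succ, Fo]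
    simp [Nat.choose_succ_self]
  have hN3 : NN l (2 * m + 3) = (2 * l + (2 * m + 2)) * NN l (2 * m + 2) / (2 * (m : ℝ) + 3) := by
    rw [eq_div_iff (by positivity)]
    have := NN_succ l (2 * m + 2)
    push_cast at this
    linarith
  have hN2 : NN l (2 * m + 2) = (2 * l + (2 * m + 1)) * NN l (2 * m + 1) / (2 * (m : ℝ) + 2) := by
    rw [eq_div_iff (by positivity)]
    have := NN_succ l (2 * m + 1)
    push_cast at this
    linarith
  rw [hpad, Fo, Fe, Finset.mul_sum, Finset.mul_sum, Finset.mul_sum, ← Finset.sum_sub_distrib]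
  refine Finset.sum_congr rfl fun s hs => ?_
  have hs' : s ≤ m + 1 := by simpa [Nat.lt_succ_iff] using hs
  have hc := choose_cast_id m s hs'
  have hml : (0 : ℝ) < l + m + 1 := by push_cast; linarith
  have hR : poch (l + ((m : ℕ) + 1 : ℕ) + 1) s
      = (l + (m : ℝ) + 1 + s) * poch (l + m + 1) s / (l + (m : ℝ) + 1) := by
    rw [eq_div_iff (by positivity)]
    have h1 : poch (l + m + 1) (s + 1) = poch (l + m + 1) s * (l + m + 1 + s) := poch_succ _ s
    have h2 : poch (l + m + 1) (s + 1) = (l + m + 1) * poch (l + m + 1 + 1) s := poch_succ' _ s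
    have h3 : poch (l + ((m : ℕ) + 1 : ℕ) + 1) s = poch (l + m + 1 + 1) s := by
      congr 1
      push_cast; ring
    rw [h3]
    push_cast at h1 h2 ⊢
    linarith
  have hP : poch (l + ((m : ℕ) + 1 : ℕ)) s = poch (l + m + 1) s := by
    congr 1
    push_cast; ring
  have hc0 : ((m.choose s : ℕ) : ℝ) = ((m : ℝ) + 1 - s) * (((m+1).choose s : ℕ) : ℝ) / ((m : ℝ) + 1) := by
    rw [eq_div_iff (by positivity)]
    linarith [hc]
  rw [hc0, hR, hP, hN3, hN2]
  have hQ := (hQpos s).ne'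
  set Q := poch (l + 1/2) s with hQdef
  set P := poch (l + (m : ℝ) + 1) s with hPdef
  set ν := NN l (2*m+1) with hnu
  field_simp
  ring


/-! ### main identity -/

lemma main_pair {l : ℝ} (hl1 : -(1/2 : ℝ) < l) (hl2 : l < 0) (m : ℕ) (θ : ℝ) :
    EE l (2 * m) θ = NN l (2 * m) * Fe l m (Real.sin θ ^ 2) ∧
      EE l (2 * m + 1) θ = NN l (2 * m + 1) * Real.cos θ * Fo l m (Real.sin θ ^ 2) := by
  induction m with
  | zero =>
    constructor
    · simp [EE, NN, Fe, poch_zero, gg_zero]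
    · rw [show 2 * 0 + 1 = 1 from rfl]
      rw [EE, Finset.sum_range_succ, Finset.sum_range_succ, Finset.sum_range_zero]
      rw [NN, Fo]
      simp [gg_zero, poch_succ, poch_zero, gg]
      rw [show ((1:ℝ) - 2) * θ = -θ by ring, Real.cos_neg]
      ring
  | succ m ih =>
    obtain ⟨ihe, iho⟩ := ih
    have h2 : (2 * (m : ℝ) + 2) ≠ 0 := by positivity
    have h3 : (2 * (m : ℝ) + 3) ≠ 0 := by positivity
    have hcos : Real.cos θ ^ 2 = 1 - Real.sin θ ^ 2 := Real.cos_sq' θ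
    have heven : EE l (2 * m + 2) θ = NN l (2 * m + 2) * Fe l (m + 1) (Real.sin θ ^ 2) := by
      have hr := EE_rec l (2 * m) θ
      rw [iho, ihe] at hr
      push_cast at hr
      have hf := Fe_rec hl1 hl2 m (Real.sin θ ^ 2)
      have key : (2 * (m : ℝ) + 2) * EE l (2 * m + 2) θ =
          (2 * (m : ℝ) + 2) * (NN l (2 * m + 2) * Fe l (m + 1) (Real.sin θ ^ 2)) := by
        linear_combination hr - hf +
          (2 * (2 * (m : ℝ) + 1 + l) * NN l (2 * m + 1) * Fo l m (Real.sin θ ^ 2)) * hcos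
      exact mul_left_cancel₀ h2 key
    constructor
    · rw [show 2 * (m + 1) = 2 * m + 2 from by omega]
      exact heven
    · rw [show 2 * (m + 1) + 1 = 2 * m + 3 from by omega]
      have hr := EE_rec l (2 * m + 1) θ
      rw [show 2 * m + 1 + 2 = 2 * m + 3 from by omega,
        show 2 * m + 1 + 1 = 2 * m + 2 from by omega] at hr
      rw [iho, heven] at hr
      push_cast at hr
      have hf := Fo_rec hl1 hl2 m (Real.sin θ ^ 2)
      have key : (2 * (m : ℝ) + 3) * EE l (2 * m + 3) θ =
          (2 * (m : ℝ) + 3) * (NN l (2 * m + 3) * Real.cos θ * Fo l (m + 1) (Real.sin θ ^ 2)) := by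
        linear_combination hr - Real.cos θ * hf
      exact mul_left_cancel₀ h3 key

lemma main_identity {l : ℝ} (hl1 : -(1/2 : ℝ) < l) (hl2 : l < 0) (r : ℕ) (θ : ℝ) :
    NN l (2 * r) * S2r r l (Real.cos θ) = EE l (2 * r) θ := by
  have h := (main_pair hl1 hl2 r θ).1
  rw [h]
  congr 1
  rw [S2r, Fe]
  refine Finset.sum_congr rfl fun s _ => ?_
  rw [Real.sin_sq]

/-! ### final inequalities -/

lemma Fe_at_zero (l : ℝ) (r : ℕ) : Fe l r 0 = 1 := by
  rw [Fe, Finset.sum_eq_single 0]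
  · simp [poch_zero]
  · intro b _ hb
    simp [zero_pow hb]
  · intro h
    exact absurd (Finset.mem_range.mpr (Nat.succ_pos r)) h

lemma sum_w {l : ℝ} (hl1 : -(1/2 : ℝ) < l) (hl2 : l < 0) (r : ℕ) :
    ∑ k ∈ Finset.range (2 * r + 1), gg l k * gg l (2 * r - k) = NN l (2 * r) := by
  have h := (main_pair hl1 hl2 r 0).1
  rw [Real.sin_zero] at h
  rw [show (0:ℝ)^2 = 0 by ring, Fe_at_zero, mul_one] at h
  rw [← h, EE]
  refine Finset.sum_congr rfl fun k _ => ?_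
  rw [mul_zero, Real.cos_zero, mul_one]

lemma NN2r_neg {l : ℝ} (hl1 : -(1/2 : ℝ) < l) (hl2 : l < 0) {r : ℕ} (hr : 1 ≤ r) :
    NN l (2 * r) < 0 := by
  obtain ⟨n, hn⟩ : ∃ n, 2 * r = n + 1 := ⟨2 * r - 1, by omega⟩
  rw [hn]
  exact NN_neg hl1 hl2 n

lemma w_pos {l : ℝ} (hl1 : -(1/2 : ℝ) < l) (hl2 : l < 0) {r k : ℕ} (hk1 : 1 ≤ k)
    (hk2 : k ≤ 2 * r - 1) (hr : 1 ≤ r) : 0 < gg l k * gg l (2 * r - k) := by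
  obtain ⟨j, hj⟩ : ∃ j, k = j + 1 := ⟨k - 1, by omega⟩
  obtain ⟨i, hi⟩ : ∃ i, 2 * r - k = i + 1 := ⟨2 * r - k - 1, by omega⟩
  rw [hi, hj]
  exact mul_pos_of_neg_of_neg (gg_neg hl1 hl2 j) (gg_neg hl1 hl2 i)

lemma key_sum {l : ℝ} (hl1 : -(1/2 : ℝ) < l) (hl2 : l < 0) (r : ℕ) (θ : ℝ) (ε : ℝ) :
    NN l (2 * r) * (1 + ε * S2r r l (Real.cos θ)) =
      ∑ k ∈ Finset.range (2 * r + 1), gg l k * gg l (2 * r - k) *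
        (1 + ε * Real.cos ((((2 * r : ℕ) : ℝ) - 2 * k) * θ)) := by
  have e1 : NN l (2 * r) * S2r r l (Real.cos θ) = EE l (2 * r) θ := main_identity hl1 hl2 r θ
  rw [EE] at e1
  have e2 := sum_w hl1 hl2 r
  calc NN l (2 * r) * (1 + ε * S2r r l (Real.cos θ))
      = NN l (2 * r) + ε * (NN l (2 * r) * S2r r l (Real.cos θ)) := by ring
    _ = (∑ k ∈ Finset.range (2 * r + 1), gg l k * gg l (2 * r - k)) +
        ε * ∑ k ∈ Finset.range (2 * r + 1), gg l k * gg l (2 * r - k) *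
          Real.cos ((((2 * r : ℕ) : ℝ) - 2 * k) * θ) := by rw [e1, e2]
    _ = _ := by
        rw [Finset.mul_sum, ← Finset.sum_add_distrib]
        exact Finset.sum_congr rfl fun k _ => by ring

lemma crux_min {l : ℝ} (hl1 : -(1/2 : ℝ) < l) (hl2 : l < 0) {r : ℕ} (hr : 1 ≤ r) (θ : ℝ)
    (hc : Real.cos (2 * (r : ℝ) * θ) = -1) : 1 + S2r r l (Real.cos θ) < 0 := by
  have hkey := key_sum hl1 hl2 r θ 1
  have hpos : 0 < ∑ k ∈ Finset.range (2 * r + 1), gg l k * gg l (2 * r - k) *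
      (1 + 1 * Real.cos ((((2 * r : ℕ) : ℝ) - 2 * k) * θ)) := by
    apply Finset.sum_pos'
    · intro k hk
      rw [Finset.mem_range] at hk
      by_cases h0 : k = 0
      · subst h0
        rw [show ((((2 * r : ℕ) : ℝ) - 2 * (0 : ℕ)) * θ) = 2 * (r : ℝ) * θ by push_cast; ring, hc]
        norm_num
      · by_cases h2r : k = 2 * r
        · subst h2r
          rw [show ((((2 * r : ℕ) : ℝ) - 2 * (2 * r : ℕ)) * θ) = -(2 * (r : ℝ) * θ) by
            push_cast; ring, Real.cos_neg, hc]
          norm_num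
        · have hw := w_pos hl1 hl2 (show 1 ≤ k by omega) (show k ≤ 2 * r - 1 by omega) hr
          have hcb := Real.neg_one_le_cos (((((2 * r : ℕ) : ℝ) - 2 * k) * θ))
          nlinarith
    · refine ⟨r, Finset.mem_range.mpr (by omega), ?_⟩
      have hw := w_pos hl1 hl2 (show 1 ≤ r from hr) (show r ≤ 2 * r - 1 by omega) hr
      rw [show ((((2 * r : ℕ) : ℝ) - 2 * r) * θ) = 0 by push_cast; ring, Real.cos_zero]
      nlinarith
  rw [← hkey] at hpos
  have hN := NN2r_neg hl1 hl2 hr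
  nlinarith

lemma crux_max {l : ℝ} (hl1 : -(1/2 : ℝ) < l) (hl2 : l < 0) {r : ℕ} (hr : 2 ≤ r) (θ : ℝ)
    (hc : Real.cos (2 * (r : ℝ) * θ) = 1) (hc2 : Real.cos (2 * θ) < 1) :
    1 - S2r r l (Real.cos θ) < 0 := by
  have hkey := key_sum hl1 hl2 r θ (-1)
  have hpos : 0 < ∑ k ∈ Finset.range (2 * r + 1), gg l k * gg l (2 * r - k) *
      (1 + (-1) * Real.cos ((((2 * r : ℕ) : ℝ) - 2 * k) * θ)) := by
    apply Finset.sum_pos'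
    · intro k hk
      rw [Finset.mem_range] at hk
      by_cases h0 : k = 0
      · subst h0
        rw [show ((((2 * r : ℕ) : ℝ) - 2 * (0 : ℕ)) * θ) = 2 * (r : ℝ) * θ by push_cast; ring, hc]
        norm_num
      · by_cases h2r : k = 2 * r
        · subst h2r
          rw [show ((((2 * r : ℕ) : ℝ) - 2 * (2 * r : ℕ)) * θ) = -(2 * (r : ℝ) * θ) by
            push_cast; ring, Real.cos_neg, hc]
          norm_num
        · have hw := w_pos hl1 hl2 (show 1 ≤ k by omega) (show k ≤ 2 * r - 1 by omega) (by omega)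
          have hcb := Real.cos_le_one (((((2 * r : ℕ) : ℝ) - 2 * k) * θ))
          nlinarith
    · refine ⟨r - 1, Finset.mem_range.mpr (by omega), ?_⟩
      have hw := w_pos hl1 hl2 (show 1 ≤ r - 1 by omega) (show r - 1 ≤ 2 * r - 1 by omega)
        (by omega)
      have hang : (((2 * r : ℕ) : ℝ) - 2 * ((r - 1 : ℕ) : ℝ)) * θ = 2 * θ := by
        rw [Nat.cast_sub (by omega : 1 ≤ r)]
        push_cast
        ring
      rw [hang]
      nlinarith
  rw [← hkey] at hpos
  have hN := NN2r_neg hl1 hl2 (show 1 ≤ r by omega)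
  nlinarith

/-- for -1/2 < lambda < 0, the polynomial 1 + sign(v) S_{2r}(., lambda) is
negative at the local extrema of the Chebyshev polynomial T_{2r}. -/
theorem stmt12 (r : ℕ) (hr : 1 ≤ r) (l : ℝ) (hl1 : -(1 / 2 : ℝ) < l) (hl2 : l < 0) :
    (∀ k : ℕ, k ≤ r - 1 →
      1 + S2r r l (Real.cos ((2 * k + 1) * Real.pi / (2 * r))) < 0) ∧
    (∀ k : ℕ, 1 ≤ k → k ≤ r - 1 →
      1 - S2r r l (Real.cos (k * Real.pi / r)) < 0) := by
  have hrR : ((r : ℝ)) ≠ 0 := Nat.cast_ne_zero.mpr (by omega)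
  constructor
  · intro k _
    apply crux_min hl1 hl2 hr
    have harg : 2 * (r : ℝ) * ((2 * (k : ℝ) + 1) * Real.pi / (2 * (r : ℝ))) =
        Real.pi + (k : ℤ) * (2 * Real.pi) := by
      push_cast
      field_simp
      ring
    rw [harg, Real.cos_add_int_mul_two_pi, Real.cos_pi]
  · intro k hk1 hk2
    have hr2 : 2 ≤ r := by omega
    apply crux_max hl1 hl2 hr2
    · have harg : 2 * (r : ℝ) * ((k : ℝ) * Real.pi / (r : ℝ)) = (k : ℤ) * (2 * Real.pi) := by
        push_cast
        field_simp
      rw [harg, Real.cos_int_mul_two_pi]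
    · have hle := Real.cos_le_one (2 * ((k : ℝ) * Real.pi / (r : ℝ)))
      rcases lt_or_eq_of_le hle with h | h
      · exact h
      · exfalso
        obtain ⟨n, hn⟩ := (Real.cos_eq_one_iff _).mp h
        have hπ : Real.pi ≠ 0 := Real.pi_ne_zero
        have hnk : (n : ℝ) * (r : ℝ) = (k : ℝ) := by
          field_simp at hn
          have h2π : (2 * Real.pi) ≠ 0 := by positivity
          apply mul_right_cancel₀ h2π
          linear_combination (2 * Real.pi) * hn
        have hnk' : n * (r : ℤ) = (k : ℤ) := by exact_mod_cast hnk
        have hkr : k < r := by omega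
        have hrpos : (0 : ℤ) < (r : ℤ) := by exact_mod_cast (by omega : 0 < r)
        have hkpos : (0 : ℤ) < (k : ℤ) := by exact_mod_cast (by omega : 0 < k)
        have hkr' : (k : ℤ) < (r : ℤ) := by exact_mod_cast hkr
        rcases le_or_gt n 0 with hn0 | hn0
        · nlinarith
        · nlinarith
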